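/- Let σ(s) = 1/(1 + e^{−s}) denote the logistic function. For every ε ∈ (0, 1], define g_ε : ℝ → ℝ by g_ε(x) = log σ( 2ε sin(x/√ε) ). Then g_ε is twice continuously differentiable and for every x ∈ ℝ: |g_ε'(x)| ≤ 2 and |g_ε''(x)| ≤ 3. -/

import Mathlib

/-- The logistic (sigmoid) function. -/
noncomputable def logistic (s : ℝ) : ℝ := (1 + Real.exp (-s))⁻¹

/-- The log-probability assigned to the target label by the classifier of the
sharpness construction. -/
noncomputable def gEps (ε : ℝ) (x : ℝ) : ℝ :=
  Real.log (logistic (2 * ε * Real.sin (x / Real.sqrt ε)))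

/-!
With `s(x) = a sin(x / c)` one has `(log σ)' = 1 - σ` and `(log σ)'' = -σ (1 - σ)`, so
`g' = (1 - σ(s)) s'` and `g'' = -σ(s)(1 - σ(s)) s'² + (1 - σ(s)) s''`. Since `0 < σ < 1`,
`|1 - σ| ≤ 1` and `σ (1 - σ) ≤ 1/4`, while `|s'| ≤ |a / c|` and `|s''| ≤ |a / c / c|`.
For `a = 2ε`, `c = √ε` these are `2√ε ≤ 2` and `2`, giving `|g'| ≤ 2` and `|g''| ≤ ε + 2 ≤ 3`.
-/

open Real

namespace logistic

lemma pos (s : ℝ) : 0 < logistic s := inv_pos.mpr (by positivity)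

lemma lt_one (s : ℝ) : logistic s < 1 :=
  inv_lt_one_of_one_lt₀ (lt_add_of_pos_right 1 (exp_pos _))

lemma abs_one_sub_le_one (s : ℝ) : |1 - logistic s| ≤ 1 := by
  have := pos s
  have := lt_one s
  rw [abs_le]
  constructor <;> linarith

lemma abs_mul_one_sub_le (s : ℝ) : |logistic s * (1 - logistic s)| ≤ 1 / 4 := by
  have := pos s
  have := lt_one s
  rw [abs_of_pos (by nlinarith)]
  nlinarith [sq_nonneg (logistic s - 1 / 2)]

lemma contDiff {n : WithTop ℕ∞} : ContDiff ℝ n logistic :=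
  (contDiff_const.add (contDiff_exp.comp contDiff_neg)).inv fun _ =>
    (add_pos one_pos (exp_pos _)).ne'

lemma hasDerivAt (s : ℝ) : HasDerivAt logistic (logistic s * (1 - logistic s)) s := by
  have hden : HasDerivAt (fun s => 1 + exp (-s)) (-exp (-s)) s := by
    simpa using ((hasDerivAt_neg s).exp).const_add 1
  refine (hden.inv (by positivity)).congr_deriv ?_
  have : 0 < 1 + exp (-s) := by positivity
  simp only [logistic]
  field_simp
  ring

lemma hasDerivAt_log (s : ℝ) :
    HasDerivAt (fun s => log (logistic s)) (1 - logistic s) s :=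
  ((hasDerivAt s).log (pos s).ne').congr_deriv (by field_simp [(pos s).ne'])

end logistic

lemma hasDerivAt_mul_sin_div (a c x : ℝ) :
    HasDerivAt (fun x => a * sin (x / c)) (a / c * cos (x / c)) x :=
  (((hasDerivAt_id' x).div_const c).sin.const_mul a).congr_deriv (by ring)

lemma hasDerivAt_mul_cos_div (b c x : ℝ) :
    HasDerivAt (fun x => b * cos (x / c)) (-(b / c) * sin (x / c)) x :=
  (((hasDerivAt_id' x).div_const c).cos.const_mul b).congr_deriv (by ring)

noncomputable def logLogisticSin (a c x : ℝ) : ℝ := log (logistic (a * sin (x / c)))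

namespace logLogisticSin

variable (a c : ℝ)

lemma contDiff {n : WithTop ℕ∞} : ContDiff ℝ n (logLogisticSin a c) :=
  (logistic.contDiff.comp (contDiff_const.mul (contDiff_sin.comp
    (contDiff_id.div_const c)))).log fun _ => (logistic.pos _).ne'

lemma deriv_eq :
    deriv (logLogisticSin a c) =
      fun x => (1 - logistic (a * sin (x / c))) * (a / c * cos (x / c)) :=
  funext fun x =>
    ((logistic.hasDerivAt_log _).comp x (hasDerivAt_mul_sin_div a c x)).deriv

lemma deriv_deriv_eq (x : ℝ) :
    deriv (deriv (logLogisticSin a c)) x =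
      (1 - logistic (a * sin (x / c))) * (-(a / c / c) * sin (x / c)) -
        logistic (a * sin (x / c)) * (1 - logistic (a * sin (x / c))) *
          (a / c * cos (x / c)) ^ 2 := by
  rw [deriv_eq]
  have hσ := ((logistic.hasDerivAt _).comp x (hasDerivAt_mul_sin_div a c x)).const_sub 1
  refine ((hσ.mul (hasDerivAt_mul_cos_div (a / c) c x)).congr_deriv ?_).deriv
  simp only [Function.comp_apply]
  ring

lemma abs_deriv_le (x : ℝ) : |deriv (logLogisticSin a c) x| ≤ |a / c| := by
  rw [deriv_eq, abs_mul, abs_mul]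
  calc _ ≤ 1 * (|a / c| * 1) := by
        gcongr
        exacts [logistic.abs_one_sub_le_one _, abs_cos_le_one _]
    _ = |a / c| := by ring

lemma abs_deriv_deriv_le (x : ℝ) :
    |deriv (deriv (logLogisticSin a c)) x| ≤ (a / c) ^ 2 / 4 + |a / c / c| := by
  have hs' : |a / c * cos (x / c)| ≤ |a / c| := by
    rw [abs_mul]
    exact mul_le_of_le_one_right (abs_nonneg _) (abs_cos_le_one _)
  have hs'' : |-(a / c / c) * sin (x / c)| ≤ |a / c / c| := by
    rw [abs_mul, abs_neg]
    exact mul_le_of_le_one_right (abs_nonneg _) (abs_sin_le_one _)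
  rw [deriv_deriv_eq]
  calc _ ≤ |1 - logistic (a * sin (x / c))| * |-(a / c / c) * sin (x / c)| +
          |logistic (a * sin (x / c)) * (1 - logistic (a * sin (x / c)))| *
            |a / c * cos (x / c)| ^ 2 := by
        rw [← abs_mul, ← abs_pow, ← abs_mul]
        exact abs_sub _ _
    _ ≤ 1 * |a / c / c| + 1 / 4 * |a / c| ^ 2 := by
        gcongr
        exacts [logistic.abs_one_sub_le_one _, logistic.abs_mul_one_sub_le _]
    _ = (a / c) ^ 2 / 4 + |a / c / c| := by rw [sq_abs]; ring

end logLogisticSin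

theorem stmt17 (ε : ℝ) (hε : 0 < ε) (hε1 : ε ≤ 1) :
    ContDiff ℝ 2 (gEps ε) ∧
    ∀ x : ℝ, |deriv (gEps ε) x| ≤ 2 ∧ |deriv (deriv (gEps ε)) x| ≤ 3 := by
  have hg : gEps ε = logLogisticSin (2 * ε) √ε := rfl
  have hsqrt : √ε ^ 2 = ε := sq_sqrt hε.le
  have hsqrt_pos : 0 < √ε := sqrt_pos.mpr hε
  have hslope : 2 * ε / √ε = 2 * √ε := by field_simp; linarith
  have hcurv : 2 * ε / √ε / √ε = 2 := by field_simp; linarith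
  have hsqrt_le : √ε ≤ 1 := sqrt_le_one.mpr hε1
  refine ⟨hg ▸ logLogisticSin.contDiff _ _, fun x => ⟨?_, ?_⟩⟩
  · calc _ ≤ |2 * ε / √ε| := hg ▸ logLogisticSin.abs_deriv_le _ _ x
      _ ≤ 2 := by rw [hslope, abs_of_pos (by positivity)]; linarith
  · calc _ ≤ (2 * ε / √ε) ^ 2 / 4 + |2 * ε / √ε / √ε| :=
          hg ▸ logLogisticSin.abs_deriv_deriv_le _ _ x
      _ ≤ 3 := by rw [hcurv, hslope]; nlinarith
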